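/- arXiv:1301.6061 — 4 statements merged into one kernel-verified Lean document; each statement's English description precedes it below -/
import Mathlib

section
/- For r > 0 and Ψ_β(q) = r√(1−2β)q^(−β) on (0,1] extended by zero, the L²(0,2) norm of the autoconvolution satisfies ‖Ψ_β * Ψ_β‖_{L²(0,2)} ≤ √2 · r² · (1−2β) · π · 2^{1−2β}, and hence ‖Ψ_β * Ψ_β‖_{L²(0,2)} → 0 as β → 1/2 from below. -/
/-!
For `0 < q < s ≤ 2` we have `(s - q) q ≤ s² / 4 ≤ 1`, so for `β ≤ 1/2` the integrand
`Ψ_β(s - q) Ψ_β(q) ≤ r² (1 - 2β) ((s - q) q)^(-β)` is dominated by `r² (1 - 2β) ((s - q) q)^(-1/2)`,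
whose integral over `(0, s)` is `r² (1 - 2β) π` because `arcsin (2q/s - 1)` is an antiderivative.
Thus `0 ≤ Ψ_β * Ψ_β ≤ r² (1 - 2β) π` on `(0, 2]`, which bounds the `L²(0,2)` norm by
`√2 r² (1 - 2β) π ≤ √2 r² (1 - 2β) π 2^(1-2β)`; this bound is continuous in `β` and vanishes at
`β = 1/2`, which gives the limit.
-/

open MeasureTheory Set Filter

/-- `Ψ_β(q) = r √(1-2β) q^(-β)` on `(0,1]`, extended by zero. -/
noncomputable def Psi (r β : ℝ) (q : ℝ) : ℝ :=
  if q ∈ Ioc (0:ℝ) 1 then r * Real.sqrt (1 - 2*β) * q ^ (-β) else 0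

/-- The autoconvolution `[Ψ_β * Ψ_β](s) = ∫₀ˢ Ψ_β(s-q) Ψ_β(q) dq`. -/
noncomputable def PsiConv (r β : ℝ) (s : ℝ) : ℝ :=
  ∫ q in Ioc (0:ℝ) s, Psi r β (s - q) * Psi r β q

open Real

theorem hasDerivAt_arcsin_two_mul_div_sub_one {s q : ℝ} (hq : q ∈ Ioo 0 s) :
    HasDerivAt (fun x => arcsin (2 * x / s - 1)) (((s - q) * q) ^ (-(1/2) : ℝ)) q := by
  obtain ⟨hq0, hqs⟩ := hq
  have hs : 0 < s := hq0.trans hqs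
  have hX : 0 < (s - q) * q := mul_pos (by linarith) hq0
  have hlo : 2 * q / s - 1 ≠ -1 := by
    have : 0 < 2 * q / s := by positivity
    linarith
  have hhi : 2 * q / s - 1 ≠ 1 := by
    have : 2 * q / s < 2 := by rw [div_lt_iff₀ hs]; linarith
    linarith
  have hinner : HasDerivAt (fun x : ℝ => 2 * x / s - 1) (2 / s) q := by
    simpa using ((hasDerivAt_id q).const_mul 2 |>.div_const s).sub_const 1
  refine ((hasDerivAt_arcsin hlo hhi).comp q hinner).congr_deriv ?_
  have hsq : 1 - (2 * q / s - 1) ^ 2 = (2 / s) ^ 2 * ((s - q) * q) := by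
    field_simp; ring
  rw [hsq, sqrt_mul (by positivity), sqrt_sq (by positivity), rpow_neg hX.le,
    ← sqrt_eq_rpow]
  field_simp

theorem integrableOn_rpow_neg_half_mul_sub (s : ℝ) :
    IntegrableOn (fun q => ((s - q) * q) ^ (-(1/2) : ℝ)) (Ioc 0 s) :=
  intervalIntegral.integrableOn_deriv_of_nonneg (by fun_prop)
    (fun _ hq => hasDerivAt_arcsin_two_mul_div_sub_one hq)
    fun _ hq => rpow_nonneg (mul_nonneg (by linarith [hq.2]) hq.1.le) _

theorem integral_rpow_neg_half_mul_sub {s : ℝ} (hs : 0 < s) :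
    ∫ q in Ioc 0 s, ((s - q) * q) ^ (-(1/2) : ℝ) = π := by
  rw [← intervalIntegral.integral_of_le hs.le,
    intervalIntegral.integral_eq_sub_of_hasDerivAt_of_le hs.le (by fun_prop)
      (fun _ hq => hasDerivAt_arcsin_two_mul_div_sub_one hq)
      ((intervalIntegrable_iff_integrableOn_Ioc_of_le hs.le).2
        (integrableOn_rpow_neg_half_mul_sub s))]
  simp [hs.ne']
  norm_num

theorem Psi_mul_Psi_nonneg (r β x y : ℝ) : 0 ≤ Psi r β x * Psi r β y := by
  unfold Psi
  split_ifs with hx hy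
  · have hxy : 0 ≤ x ^ (-β) * y ^ (-β) := by
      have := rpow_nonneg hx.1.le (-β); have := rpow_nonneg hy.1.le (-β); positivity
    calc (0 : ℝ) ≤ (r * √(1 - 2 * β)) ^ 2 * (x ^ (-β) * y ^ (-β)) := by positivity
      _ = _ := by ring
  all_goals simp

theorem Psi_mul_Psi_le {r β x y : ℝ} (hβ : β ≤ 1/2) (hx : 0 < x) (hy : 0 < y) :
    Psi r β x * Psi r β y ≤ r ^ 2 * (1 - 2 * β) * (x * y) ^ (-β) := by
  have hbound : 0 ≤ r ^ 2 * (1 - 2 * β) * (x * y) ^ (-β) := by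
    have := rpow_nonneg (mul_pos hx hy).le (-β)
    have : 0 ≤ 1 - 2 * β := by linarith
    positivity
  unfold Psi
  split_ifs
  · refine le_of_eq ?_
    calc _ = r ^ 2 * (√(1 - 2 * β) ^ 2) * (x ^ (-β) * y ^ (-β)) := by ring
      _ = _ := by rw [sq_sqrt (by linarith), mul_rpow hx.le hy.le]
  all_goals simpa using hbound

theorem PsiConv_nonneg (r β s : ℝ) : 0 ≤ PsiConv r β s :=
  setIntegral_nonneg measurableSet_Ioc fun _ _ => Psi_mul_Psi_nonneg ..

theorem PsiConv_le {r β s : ℝ} (hβ : β ≤ 1/2) (hs0 : 0 < s) (hs2 : s ≤ 2) :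
    PsiConv r β s ≤ r ^ 2 * (1 - 2 * β) * π := by
  have hc : 0 ≤ r ^ 2 * (1 - 2 * β) := mul_nonneg (sq_nonneg r) (by linarith)
  rw [← integral_rpow_neg_half_mul_sub hs0, ← integral_const_mul, PsiConv,
    integral_Ioc_eq_integral_Ioo, integral_Ioc_eq_integral_Ioo]
  refine integral_mono_of_nonneg (.of_forall fun _ => Psi_mul_Psi_nonneg ..)
    (((integrableOn_rpow_neg_half_mul_sub s).mono_set Ioo_subset_Ioc_self).const_mul _) ?_
  refine (ae_restrict_iff' measurableSet_Ioo).mpr (.of_forall fun q ⟨hq0, hqs⟩ => ?_)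
  have hX : 0 < (s - q) * q := mul_pos (by linarith) hq0
  have hX1 : (s - q) * q ≤ 1 := by nlinarith [sq_nonneg (s - 2 * q)]
  calc Psi r β (s - q) * Psi r β q ≤ r ^ 2 * (1 - 2 * β) * ((s - q) * q) ^ (-β) :=
        Psi_mul_Psi_le hβ (by linarith) hq0
    _ ≤ r ^ 2 * (1 - 2 * β) * ((s - q) * q) ^ (-(1/2) : ℝ) :=
        mul_le_mul_of_nonneg_left (rpow_le_rpow_of_exponent_ge hX hX1 (by linarith)) hc

theorem sqrt_setIntegral_Ioc_sq_le {f : ℝ → ℝ} {a b M : ℝ} (hab : a ≤ b) (hM : 0 ≤ M)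
    (hf : ∀ x ∈ Ioc a b, |f x| ≤ M) :
    √(∫ x in Ioc a b, f x ^ 2) ≤ √(b - a) * M := by
  have hsq : ∫ x in Ioc a b, f x ^ 2 ≤ (b - a) * M ^ 2 := by
    calc ∫ x in Ioc a b, f x ^ 2 ≤ ∫ _ in Ioc a b, M ^ 2 := by
          refine integral_mono_of_nonneg (.of_forall fun _ => sq_nonneg _)
            (integrableOn_const measure_Ioc_lt_top.ne) ?_
          refine (ae_restrict_iff' measurableSet_Ioc).mpr (.of_forall fun x hx => ?_)
          simpa only [sq_abs] using pow_le_pow_left₀ (abs_nonneg _) (hf x hx) 2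
      _ = (b - a) * M ^ 2 := by
          rw [setIntegral_const, Real.volume_real_Ioc_of_le hab, smul_eq_mul]
  calc √(∫ x in Ioc a b, f x ^ 2) ≤ √((b - a) * M ^ 2) := sqrt_le_sqrt hsq
    _ = √(b - a) * M := by rw [sqrt_mul (by linarith), sqrt_sq hM]

theorem sqrt_integral_PsiConv_sq_le {r β : ℝ} (hβ : β ≤ 1/2) :
    √(∫ s in Ioc (0:ℝ) 2, PsiConv r β s ^ 2) ≤ √2 * (r ^ 2 * (1 - 2 * β) * π) := by
  have hM : 0 ≤ r ^ 2 * (1 - 2 * β) * π := by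
    have : 0 ≤ 1 - 2 * β := by linarith
    positivity
  simpa using sqrt_setIntegral_Ioc_sq_le zero_le_two hM fun s ⟨hs0, hs2⟩ =>
    (abs_of_nonneg (PsiConv_nonneg r β s)).trans_le (PsiConv_le hβ hs0 hs2)

theorem stmt3_general (r : ℝ) :
    (∀ β ∈ Ioo (0:ℝ) (1/2),
      Real.sqrt (∫ s in Ioc (0:ℝ) 2, (PsiConv r β s)^2)
        ≤ Real.sqrt 2 * r^2 * (1 - 2*β) * Real.pi * (2:ℝ) ^ (1 - 2*β)) ∧
    Tendsto (fun β : ℝ => Real.sqrt (∫ s in Ioc (0:ℝ) 2, (PsiConv r β s)^2))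
      (nhdsWithin (1/2) (Ioo (0:ℝ) (1/2))) (nhds 0) := by
  refine ⟨fun β ⟨_, hβ⟩ => ?_, ?_⟩
  · calc _ ≤ √2 * (r ^ 2 * (1 - 2 * β) * π) := sqrt_integral_PsiConv_sq_le hβ.le
      _ ≤ √2 * r ^ 2 * (1 - 2 * β) * π * 2 ^ (1 - 2 * β) := by
        rw [← mul_assoc, ← mul_assoc]
        refine le_mul_of_one_le_right ?_ (one_le_rpow one_le_two (by linarith))
        have : 0 ≤ 1 - 2 * β := by linarith
        positivity
  · have hbound : Tendsto (fun β : ℝ => √2 * (r ^ 2 * (1 - 2 * β) * π))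
        (nhdsWithin (1/2) (Ioo 0 (1/2))) (nhds 0) := by
      have hcont : Continuous fun β : ℝ => √2 * (r ^ 2 * (1 - 2 * β) * π) := by fun_prop
      convert hcont.continuousWithinAt.tendsto using 2
      norm_num
    refine tendsto_of_tendsto_of_tendsto_of_le_of_le' tendsto_const_nhds hbound
      (.of_forall fun _ => sqrt_nonneg _) ?_
    filter_upwards [self_mem_nhdsWithin] with β hβ
    exact sqrt_integral_PsiConv_sq_le hβ.2.le

/-- For `r > 0`, the `L²(0,2)` norm of the autoconvolution of `Ψ_β` satisfies
`‖Ψ_β * Ψ_β‖ ≤ √2 r² (1-2β) π 2^(1-2β)`, and hence tends to `0` as `β → 1/2` from below. -/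
theorem stmt3 (r : ℝ) (hr : 0 < r) :
    (∀ β ∈ Ioo (0:ℝ) (1/2),
      Real.sqrt (∫ s in Ioc (0:ℝ) 2, (PsiConv r β s)^2)
        ≤ Real.sqrt 2 * r^2 * (1 - 2*β) * Real.pi * (2:ℝ) ^ (1 - 2*β)) ∧
    Tendsto (fun β : ℝ => Real.sqrt (∫ s in Ioc (0:ℝ) 2, (PsiConv r β s)^2))
      (nhdsWithin (1/2) (Ioo (0:ℝ) (1/2))) (nhds 0) :=
  stmt3_general r
end

section
/- Let k : [0,2]×[0,1] → ℂ be continuous with k_max := max |k(s,q)|, and let F be the kernel-based autoconvolution operator [F(x)](s) = ∫₀ˢ k(s,q)x(s−q)x(q) dq. Then F : L²_ℂ(0,1) → L²_ℂ(0,2) is locally ill-posed at every point x₀ ∈ L²_ℂ(0,1): for every x₀ and every r > 0 there is a sequence (xₙ) with ‖xₙ − x₀‖_{L²(0,1)} = r for all n, but ‖F(xₙ) − F(x₀)‖_{L²(0,2)} → 0 as n → ∞. -/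
/-!
Perturb `x₀` by the box `ψ = (r / √a) • 1_(0,a]` (`normalizedBox a r`), whose `L²` norm is `r`
whatever `a > 0` is. Let `K` bound `‖k‖` and `B(f,g)(s) = ∫_(0,s] k(s,q) f(s-q) g(q) dq`
(`autoconvForm k f g s`), so that
`F(x₀ + ψ) - F(x₀) = B(x₀,ψ) + B(ψ,x₀) + B(ψ,ψ)`. By Cauchy–Schwarz the two mixed terms are at
most `K r ‖x₀‖_L²(s-a,s)`, which tends to `0` uniformly in `s` as `a → 0` by absolute continuity
of the integral of `‖x₀‖²`, while `B(ψ,ψ)` is at most `K r²` and vanishes for `s > 2a`.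
Hence `‖F(x₀ + ψ) - F(x₀)‖²_L²(0,2) = O(ε + a)` once `‖x₀‖²_L²(s-a,s) ≤ ε` for all `s`.
-/

open MeasureTheory Set Filter Topology

theorem integral_norm_mul_norm_le_sqrt {α E F : Type*} [MeasurableSpace α]
    [NormedAddCommGroup E] [NormedAddCommGroup F] {μ : Measure α} {f : α → E} {g : α → F}
    (hf : MemLp f 2 μ) (hg : MemLp g 2 μ) :
    ∫ a, ‖f a‖ * ‖g a‖ ∂μ ≤ √(∫ a, ‖f a‖ ^ 2 ∂μ) * √(∫ a, ‖g a‖ ^ 2 ∂μ) := by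
  have h := integral_mul_norm_le_Lp_mul_Lq Real.HolderConjugate.two_two
    (by simpa using hf.norm) (by simpa using hg.norm)
  simpa [Real.sqrt_eq_rpow, Real.rpow_natCast] using h

theorem MeasureTheory.MemLp.of_restrict_of_forall_notMem_eq_zero {α E : Type*}
    [MeasurableSpace α] [NormedAddCommGroup E] {μ : Measure α} {p : ENNReal} {s : Set α}
    {f : α → E} (hs : MeasurableSet s) (hf : MemLp f p (μ.restrict s))
    (h0 : ∀ x ∉ s, f x = 0) : MemLp f p μ := by
  rw [← indicator_eq_self.2 fun x hx => by_contra fun hxs => hx (h0 x hxs)]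
  exact (memLp_indicator_iff_restrict hs).2 hf

theorem IsCompact.exists_forall_norm_le_of_continuousOn {X E : Type*} [TopologicalSpace X]
    [NormedAddCommGroup E] {S : Set X} (hS : IsCompact S) {f : X → E} (hf : ContinuousOn f S)
    (h0 : ∀ x ∉ S, f x = 0) : ∃ C, ∀ x, ‖f x‖ ≤ C := by
  obtain ⟨C, hC⟩ := hS.exists_bound_of_continuousOn hf
  refine ⟨max C 0, fun x => ?_⟩
  by_cases hx : x ∈ S
  · exact (hC x hx).trans (le_max_left _ _)
  · simp [h0 x hx]

theorem MeasureTheory.Integrable.tendstoUniformly_setIntegral_Ico {E : Type*}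
    [NormedAddCommGroup E] [NormedSpace ℝ E] {f : ℝ → E} (hf : Integrable f) {ι : Type*}
    {l : Filter ι} {a : ι → ℝ} (ha : Tendsto a l (𝓝 0)) :
    TendstoUniformly (fun i t => ∫ x in Ico (t - a i) t, f x) 0 l := by
  rw [Metric.tendstoUniformly_iff]
  intro ε hε
  have hvol : Tendsto (fun p : ι × ℝ => volume (Ico (p.2 - a p.1) p.2)) (l ×ˢ ⊤) (𝓝 0) := by
    simpa [Real.volume_Ico, Function.comp_def] using (ENNReal.tendsto_ofReal ha).comp tendsto_fst
  have h := (hf.tendsto_setIntegral_nhds_zero hvol).eventually (Metric.ball_mem_nhds 0 hε)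
  rw [← principal_univ, eventually_prod_principal_iff] at h
  filter_upwards [h] with i hi t
  simpa [dist_comm] using hi t (mem_univ t)

theorem tendsto_nhds_zero_of_forall_eventually_le_mul {ι : Type*} {l : Filter ι} {u : ι → ℝ}
    (C : ℝ) (h0 : ∀ i, 0 ≤ u i) (h : ∀ ε > 0, ∀ᶠ i in l, u i ≤ C * ε) :
    Tendsto u l (𝓝 0) := by
  rw [Metric.tendsto_nhds]
  intro δ hδ
  have hC : 0 < |C| + 1 := by positivity
  filter_upwards [h (δ / (|C| + 1)) (by positivity)] with i hi
  rw [Real.dist_0_eq_abs, abs_of_nonneg (h0 i)]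
  calc u i ≤ C * (δ / (|C| + 1)) := hi
    _ ≤ |C| * (δ / (|C| + 1)) := by gcongr; exact le_abs_self C
    _ < δ := by rw [mul_div_assoc', div_lt_iff₀ hC]; nlinarith

noncomputable def normConv {E F : Type*} [NormedAddCommGroup E] [NormedAddCommGroup F]
    (f : ℝ → E) (g : ℝ → F) (s : ℝ) : ℝ :=
  ∫ q, ‖f (s - q)‖ * ‖g q‖

section normConv

variable {E F : Type*} [NormedAddCommGroup E] [NormedAddCommGroup F]

theorem MeasureTheory.MemLp.comp_sub_left {f : ℝ → E} (hf : MemLp f 2) (s : ℝ) :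
    MemLp (fun q => f (s - q)) 2 :=
  hf.comp_measurePreserving (Measure.measurePreserving_sub_left volume s)

theorem integrable_norm_comp_sub_mul_norm {f : ℝ → E} {g : ℝ → F} (hf : MemLp f 2)
    (hg : MemLp g 2) (s : ℝ) : Integrable (fun q => ‖f (s - q)‖ * ‖g q‖) :=
  (hf.comp_sub_left s).norm.integrable_mul hg.norm

theorem normConv_comm (f : ℝ → E) (g : ℝ → F) (s : ℝ) : normConv f g s = normConv g f s := by
  rw [normConv, ← integral_sub_left_eq_self _ volume s]
  simp only [normConv, sub_sub_cancel, mul_comm]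

theorem normConv_le_of_forall_notMem_eq_zero {f : ℝ → E} {g : ℝ → F} (hf : MemLp f 2)
    (hg : MemLp g 2) {a : ℝ} (hf0 : ∀ t ∉ Ioc 0 a, f t = 0) (s : ℝ) :
    normConv f g s ≤ √(∫ t, ‖f t‖ ^ 2) * √(∫ t in Ico (s - a) s, ‖g t‖ ^ 2) := by
  have hvanish : ∀ q ∉ Ico (s - a) s, ‖f (s - q)‖ * ‖g q‖ = 0 := by
    intro q hq
    rw [hf0 (s - q) fun h => hq ⟨by linarith [h.2], by linarith [h.1]⟩, norm_zero, zero_mul]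
  have hshift : ∫ q in Ico (s - a) s, ‖f (s - q)‖ ^ 2 ≤ ∫ t, ‖f t‖ ^ 2 := by
    rw [← integral_sub_left_eq_self (fun t => ‖f t‖ ^ 2) volume s]
    exact setIntegral_le_integral (hf.comp_sub_left s).norm.integrable_sq
      (ae_of_all _ fun q => by positivity)
  calc normConv f g s = ∫ q in Ico (s - a) s, ‖f (s - q)‖ * ‖g q‖ :=
        (setIntegral_eq_integral_of_forall_compl_eq_zero hvanish).symm
    _ ≤ √(∫ q in Ico (s - a) s, ‖f (s - q)‖ ^ 2) * √(∫ t in Ico (s - a) s, ‖g t‖ ^ 2) :=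
        integral_norm_mul_norm_le_sqrt ((hf.comp_sub_left s).restrict _) (hg.restrict _)
    _ ≤ √(∫ t, ‖f t‖ ^ 2) * √(∫ t in Ico (s - a) s, ‖g t‖ ^ 2) := by gcongr

end normConv

theorem aestronglyMeasurable_apply_of_continuousOn_uncurry {k : ℝ → ℝ → ℂ} {A B : Set ℝ}
    (hk : ContinuousOn (Function.uncurry k) (A ×ˢ B))
    (hk0 : ∀ s q, (s, q) ∉ A ×ˢ B → k s q = 0) (hB : MeasurableSet B) (s : ℝ) :
    AEStronglyMeasurable (k s) volume := by
  have hcont : ContinuousOn (k s) B := by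
    by_cases hs : s ∈ A
    · exact hk.comp (Continuous.prodMk_right s).continuousOn fun q hq => ⟨hs, hq⟩
    · exact continuousOn_const.congr fun q _ => hk0 s q fun h => hs h.1
  rw [← indicator_eq_self.2 fun q hq => by_contra fun hqB => hq (hk0 s q fun h => hqB h.2)]
  exact (aestronglyMeasurable_indicator_iff hB).2 (hcont.aestronglyMeasurable hB)

noncomputable def autoconvForm (k : ℝ → ℝ → ℂ) (f g : ℝ → ℂ) (s : ℝ) : ℂ :=
  ∫ q in Ioc 0 s, k s q * f (s - q) * g q

section autoconvForm

variable {k : ℝ → ℝ → ℂ} {K : ℝ} {f g : ℝ → ℂ}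

theorem integrable_autoconvForm_integrand (hK : ∀ s q, ‖k s q‖ ≤ K)
    (hkm : ∀ s, AEStronglyMeasurable (k s) volume) (hf : MemLp f 2) (hg : MemLp g 2) (s : ℝ) :
    Integrable (fun q => k s q * f (s - q) * g q) := by
  simpa only [mul_assoc, Pi.mul_apply] using
    ((hf.comp_sub_left s).integrable_mul hg).bdd_mul (hkm s) (ae_of_all _ (hK s))

theorem autoconvForm_add_add (hK : ∀ s q, ‖k s q‖ ≤ K)
    (hkm : ∀ s, AEStronglyMeasurable (k s) volume) (hf : MemLp f 2) (hg : MemLp g 2) (s : ℝ) :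
    autoconvForm k (f + g) (f + g) s = autoconvForm k f f s + autoconvForm k f g s +
      autoconvForm k g f s + autoconvForm k g g s := by
  have hI {u v : ℝ → ℂ} (hu : MemLp u 2) (hv : MemLp v 2) :
      IntegrableOn (fun q => k s q * u (s - q) * v q) (Ioc 0 s) :=
    (integrable_autoconvForm_integrand hK hkm hu hv s).integrableOn
  simp only [autoconvForm, Pi.add_apply, mul_add, add_mul]
  rw [integral_add (by exact (hI hf hf).add (hI hg hf)) (by exact (hI hf hg).add (hI hg hg)),
    integral_add (hI hf hf) (hI hg hf), integral_add (hI hf hg) (hI hg hg)]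
  ring

theorem norm_autoconvForm_le (hK : ∀ s q, ‖k s q‖ ≤ K) (hf : MemLp f 2) (hg : MemLp g 2)
    (s : ℝ) : ‖autoconvForm k f g s‖ ≤ K * normConv f g s := by
  have hK0 : 0 ≤ K := (norm_nonneg _).trans (hK 0 0)
  have hint := (integrable_norm_comp_sub_mul_norm hf hg s).const_mul K
  calc ‖autoconvForm k f g s‖ ≤ ∫ q in Ioc 0 s, K * (‖f (s - q)‖ * ‖g q‖) := by
        refine norm_integral_le_of_norm_le hint.integrableOn (ae_of_all _ fun q => ?_)
        rw [norm_mul, norm_mul, mul_assoc]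
        exact mul_le_mul_of_nonneg_right (hK s q) (by positivity)
    _ ≤ ∫ q, K * (‖f (s - q)‖ * ‖g q‖) :=
        setIntegral_le_integral hint (ae_of_all _ fun q => by positivity)
    _ = K * normConv f g s := integral_const_mul K _

end autoconvForm

noncomputable def normalizedBox (a r : ℝ) : ℝ → ℂ :=
  (Ioc 0 a).indicator fun _ => ((r / √a : ℝ) : ℂ)

section normalizedBox

variable {a : ℝ} {r : ℝ}

theorem memLp_normalizedBox : MemLp (normalizedBox a r) 2 :=
  memLp_indicator_const 2 measurableSet_Ioc _ (Or.inr measure_Ioc_lt_top.ne)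

theorem normalizedBox_of_notMem {t : ℝ} (ht : t ∉ Ioc 0 a) : normalizedBox a r t = 0 :=
  indicator_of_notMem ht _

theorem integral_norm_sq_normalizedBox (ha : 0 < a) :
    ∫ t, ‖normalizedBox a r t‖ ^ 2 = r ^ 2 := by
  have hsq : (fun t => ‖normalizedBox a r t‖ ^ 2) = (Ioc 0 a).indicator fun _ => (r / √a) ^ 2 := by
    funext t
    by_cases ht : t ∈ Ioc 0 a
    · simp [normalizedBox, ht, div_pow]
    · simp [normalizedBox, ht]
  rw [hsq, integral_indicator_const _ measurableSet_Ioc, Real.volume_real_Ioc_of_le ha.le,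
    smul_eq_mul, div_pow, Real.sq_sqrt ha.le]
  field_simp
  ring

theorem setIntegral_Ioc_norm_sq_normalizedBox (ha : 0 < a) {b : ℝ} (hab : a ≤ b) :
    ∫ t in Ioc 0 b, ‖normalizedBox a r t‖ ^ 2 = r ^ 2 := by
  rw [← integral_norm_sq_normalizedBox ha]
  refine setIntegral_eq_integral_of_forall_compl_eq_zero fun t ht => ?_
  rw [normalizedBox_of_notMem fun h => ht ⟨h.1, h.2.trans hab⟩, norm_zero, zero_pow two_ne_zero]

theorem setIntegral_Ico_norm_sq_normalizedBox_le (ha : 0 < a) (s : ℝ) :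
    ∫ t in Ico (s - a) s, ‖normalizedBox a r t‖ ^ 2 ≤
      (Iic (2 * a)).indicator (fun _ => r ^ 2) s := by
  by_cases hs : s ≤ 2 * a
  · rw [indicator_of_mem (mem_Iic.2 hs), ← integral_norm_sq_normalizedBox ha]
    exact setIntegral_le_integral memLp_normalizedBox.norm.integrable_sq
      (ae_of_all _ fun _ => by positivity)
  · rw [indicator_of_notMem (notMem_Iic.2 (not_le.1 hs)), setIntegral_eq_zero_of_forall_eq_zero]
    intro t ht
    have hst : 2 * a < s := not_le.1 hs
    rw [normalizedBox_of_notMem fun h => by linarith [h.2, ht.1], norm_zero,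
      zero_pow two_ne_zero]

end normalizedBox

section perturbation

variable {k : ℝ → ℝ → ℂ} {K : ℝ} {x : ℝ → ℂ} {a : ℝ}

theorem norm_autoconvForm_add_normalizedBox_sub_le (hK : ∀ s q, ‖k s q‖ ≤ K)
    (hkm : ∀ s, AEStronglyMeasurable (k s) volume) (hx : MemLp x 2) (ha : 0 < a) (r s : ℝ) :
    ‖autoconvForm k (x + normalizedBox a r) (x + normalizedBox a r) s - autoconvForm k x x s‖ ≤
      K * |r| * (2 * √(∫ t in Ico (s - a) s, ‖x t‖ ^ 2) +
        √(∫ t in Ico (s - a) s, ‖normalizedBox a r t‖ ^ 2)) := by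
  set ψ := normalizedBox a r
  have hψ : MemLp ψ 2 := memLp_normalizedBox
  have hψr : ∫ t, ‖ψ t‖ ^ 2 = r ^ 2 := integral_norm_sq_normalizedBox ha
  have hconv {g : ℝ → ℂ} (hg : MemLp g 2) :
      normConv ψ g s ≤ |r| * √(∫ t in Ico (s - a) s, ‖g t‖ ^ 2) := by
    simpa [hψr, Real.sqrt_sq_eq_abs] using
      normConv_le_of_forall_notMem_eq_zero hψ hg (fun t => normalizedBox_of_notMem) s
  have hK0 : 0 ≤ K := (norm_nonneg _).trans (hK 0 0)
  rw [autoconvForm_add_add hK hkm hx hψ]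
  calc ‖autoconvForm k x x s + autoconvForm k x ψ s + autoconvForm k ψ x s +
          autoconvForm k ψ ψ s - autoconvForm k x x s‖
      = ‖autoconvForm k x ψ s + autoconvForm k ψ x s + autoconvForm k ψ ψ s‖ := by ring_nf
    _ ≤ K * normConv x ψ s + K * normConv ψ x s + K * normConv ψ ψ s := by
        refine (norm_add₃_le ..).trans ?_
        gcongr <;> exact norm_autoconvForm_le hK ‹_› ‹_› s
    _ ≤ K * (|r| * √(∫ t in Ico (s - a) s, ‖x t‖ ^ 2)) +
          K * (|r| * √(∫ t in Ico (s - a) s, ‖x t‖ ^ 2)) +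
          K * (|r| * √(∫ t in Ico (s - a) s, ‖ψ t‖ ^ 2)) := by
        rw [normConv_comm x ψ]
        gcongr
        exacts [hconv hx, hconv hx, hconv hψ]
    _ = _ := by ring

theorem norm_sq_autoconvForm_add_normalizedBox_sub_le (hK : ∀ s q, ‖k s q‖ ≤ K)
    (hkm : ∀ s, AEStronglyMeasurable (k s) volume) (hx : MemLp x 2) (ha : 0 < a) (r : ℝ)
    {ε : ℝ} (hε : ∀ s, ∫ t in Ico (s - a) s, ‖x t‖ ^ 2 ≤ ε) (s : ℝ) :
    ‖autoconvForm k (x + normalizedBox a r) (x + normalizedBox a r) s - autoconvForm k x x s‖ ^ 2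
      ≤ (K * r) ^ 2 * (8 * ε + 2 * (Iic (2 * a)).indicator (fun _ => r ^ 2) s) := by
  set A := ∫ t in Ico (s - a) s, ‖x t‖ ^ 2
  set B := ∫ t in Ico (s - a) s, ‖normalizedBox a r t‖ ^ 2
  have hA : 0 ≤ A := setIntegral_nonneg measurableSet_Ico fun _ _ => by positivity
  have hB : 0 ≤ B := setIntegral_nonneg measurableSet_Ico fun _ _ => by positivity
  calc _ ≤ (K * |r| * (2 * √A + √B)) ^ 2 := by
        gcongr
        exact norm_autoconvForm_add_normalizedBox_sub_le hK hkm hx ha r s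
    _ ≤ (K * r) ^ 2 * (8 * A + 2 * B) := by
        rw [mul_pow, mul_pow, mul_pow, sq_abs]
        gcongr
        nlinarith [sq_nonneg (2 * √A - √B), Real.sq_sqrt hA, Real.sq_sqrt hB]
    _ ≤ _ := by
        gcongr
        exacts [hε s, setIntegral_Ico_norm_sq_normalizedBox_le ha s]

theorem setIntegral_norm_sq_autoconvForm_add_normalizedBox_sub_le (hK : ∀ s q, ‖k s q‖ ≤ K)
    (hkm : ∀ s, AEStronglyMeasurable (k s) volume) (hx : MemLp x 2) (ha : 0 < a) (r : ℝ)
    {ε : ℝ} (hε : ∀ s, ∫ t in Ico (s - a) s, ‖x t‖ ^ 2 ≤ ε) {L : ℝ} (hL : 0 ≤ L) :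
    ∫ s in Ioc 0 L, ‖autoconvForm k (x + normalizedBox a r) (x + normalizedBox a r) s -
        autoconvForm k x x s‖ ^ 2 ≤ (K * r) ^ 2 * (8 * ε * L + 4 * r ^ 2 * a) := by
  have hconst : IntegrableOn (fun _ => 8 * ε) (Ioc 0 L) := integrableOn_const measure_Ioc_lt_top.ne
  have hind : IntegrableOn (fun s => 2 * (Iic (2 * a)).indicator (fun _ => r ^ 2) s) (Ioc 0 L) :=
    Integrable.const_mul
      ((integrableOn_const (C := r ^ 2) measure_Ioc_lt_top.ne).indicator measurableSet_Iic) 2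
  have hmeas : volume.real (Ioc 0 L ∩ Iic (2 * a)) ≤ 2 * a := by
    calc volume.real (Ioc 0 L ∩ Iic (2 * a)) ≤ volume.real (Ioc 0 (2 * a)) :=
          measureReal_mono (fun t ht => ⟨ht.1.1, ht.2⟩) measure_Ioc_lt_top.ne
      _ = 2 * a := by rw [Real.volume_real_Ioc_of_le (by positivity), sub_zero]
  calc _ ≤ ∫ s in Ioc 0 L, (K * r) ^ 2 * (8 * ε + 2 * (Iic (2 * a)).indicator (fun _ => r ^ 2) s) :=
        integral_mono_of_nonneg (ae_of_all _ fun _ => by positivity)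
          ((hconst.add hind).const_mul _)
          (ae_of_all _ (norm_sq_autoconvForm_add_normalizedBox_sub_le hK hkm hx ha r hε))
    _ = (K * r) ^ 2 * (8 * ε * L + 2 * (volume.real (Ioc 0 L ∩ Iic (2 * a)) * r ^ 2)) := by
        rw [integral_const_mul, integral_add hconst hind, setIntegral_const, integral_const_mul,
          setIntegral_indicator measurableSet_Iic, setIntegral_const,
          Real.volume_real_Ioc_of_le hL, smul_eq_mul, smul_eq_mul]
        ring
    _ ≤ _ := by
        have : 0 ≤ (K * r) ^ 2 := sq_nonneg _
        nlinarith [sq_nonneg r, mul_le_mul_of_nonneg_right hmeas (sq_nonneg r)]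

theorem tendsto_setIntegral_norm_sq_autoconvForm_add_normalizedBox_sub
    (hK : ∀ s q, ‖k s q‖ ≤ K) (hkm : ∀ s, AEStronglyMeasurable (k s) volume) (hx : MemLp x 2)
    {ι : Type*} {l : Filter ι} {a : ι → ℝ} (ha0 : ∀ i, 0 < a i) (ha : Tendsto a l (𝓝 0))
    (r : ℝ) {L : ℝ} (hL : 0 ≤ L) :
    Tendsto (fun i => ∫ s in Ioc 0 L, ‖autoconvForm k (x + normalizedBox (a i) r)
      (x + normalizedBox (a i) r) s - autoconvForm k x x s‖ ^ 2) l (𝓝 0) := by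
  have hunif := Metric.tendstoUniformly_iff.1
    (hx.norm.integrable_sq.tendstoUniformly_setIntegral_Ico ha)
  refine tendsto_nhds_zero_of_forall_eventually_le_mul ((K * r) ^ 2 * (8 * L + 4 * r ^ 2))
    (fun i => setIntegral_nonneg measurableSet_Ioc fun _ _ => by positivity) fun ε hε => ?_
  filter_upwards [hunif ε hε, ha.eventually (ge_mem_nhds hε)] with i hE hai
  have hEi (s : ℝ) : ∫ t in Ico (s - a i) s, ‖x t‖ ^ 2 ≤ ε :=
    (le_abs_self _).trans (by simpa using (hE s).le)
  calc _ ≤ (K * r) ^ 2 * (8 * ε * L + 4 * r ^ 2 * a i) :=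
        setIntegral_norm_sq_autoconvForm_add_normalizedBox_sub_le hK hkm hx (ha0 i) r hEi hL
    _ ≤ (K * r) ^ 2 * (8 * L + 4 * r ^ 2) * ε := by
        have := mul_le_mul_of_nonneg_left hai (mul_nonneg (sq_nonneg (K * r)) (sq_nonneg r))
        linarith

end perturbation

theorem stmt5_general (k : ℝ → ℝ → ℂ)
    (hk : ContinuousOn (Function.uncurry k) (Icc (0:ℝ) 2 ×ˢ Icc (0:ℝ) 1))
    (hk0 : ∀ s q : ℝ, (s, q) ∉ Icc (0:ℝ) 2 ×ˢ Icc (0:ℝ) 1 → k s q = 0)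
    (F : (ℝ → ℂ) → ℝ → ℂ)
    (hF : ∀ x s, F x s = ∫ q in Ioc (0:ℝ) s, k s q * x (s - q) * x q)
    (x₀ : ℝ → ℂ)
    (hx₀ : MemLp x₀ 2 (volume.restrict (Ioc (0:ℝ) 1)))
    (hx₀0 : ∀ t : ℝ, t ∉ Icc (0:ℝ) 1 → x₀ t = 0)
    (r : ℝ) (hr : 0 < r) :
    ∃ xn : ℕ → ℝ → ℂ,
      (∀ n, Real.sqrt (∫ q in Ioc (0:ℝ) 1, ‖xn n q - x₀ q‖^2) = r) ∧
      Tendsto (fun n => Real.sqrt (∫ s in Ioc (0:ℝ) 2, ‖F (xn n) s - F x₀ s‖^2))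
        atTop (nhds 0) := by
  obtain rfl : F = fun x => autoconvForm k x x := funext fun x => funext (hF x)
  obtain ⟨K, hK⟩ := (isCompact_Icc.prod isCompact_Icc).exists_forall_norm_le_of_continuousOn hk
    fun p hp => hk0 p.1 p.2 hp
  replace hK (s q : ℝ) : ‖k s q‖ ≤ K := hK (s, q)
  have hkm := aestronglyMeasurable_apply_of_continuousOn_uncurry hk hk0 measurableSet_Icc
  have hx : MemLp x₀ 2 := by
    rw [Measure.restrict_congr_set Ioc_ae_eq_Icc] at hx₀
    exact hx₀.of_restrict_of_forall_notMem_eq_zero measurableSet_Icc hx₀0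
  set a : ℕ → ℝ := fun n => 1 / ((n : ℝ) + 1)
  have ha0 (n : ℕ) : 0 < a n := by positivity
  have ha1 (n : ℕ) : a n ≤ 1 := div_le_one_of_le₀ (by simp) (by positivity)
  refine ⟨fun n => x₀ + normalizedBox (a n) r, fun n => ?_, ?_⟩
  · simp only [Pi.add_apply, add_sub_cancel_left]
    rw [setIntegral_Ioc_norm_sq_normalizedBox (ha0 n) (ha1 n), Real.sqrt_sq hr.le]
  · have h := tendsto_setIntegral_norm_sq_autoconvForm_add_normalizedBox_sub hK hkm hx ha0
      tendsto_one_div_add_atTop_nhds_zero_nat r zero_le_two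
    exact (Real.continuous_sqrt.tendsto' 0 0 Real.sqrt_zero).comp h

/-- The kernel-based autoconvolution operator `F : L²_ℂ(0,1) → L²_ℂ(0,2)` with continuous kernel
`k` is locally ill-posed at every point `x₀`: for every `x₀` and every `r > 0` there is a
sequence `(xₙ)` at distance exactly `r` from `x₀` in `L²(0,1)` with `F(xₙ) → F(x₀)` in
`L²(0,2)`. -/
theorem stmt5 (k : ℝ → ℝ → ℂ)
    (hk : ContinuousOn (Function.uncurry k) (Icc (0:ℝ) 2 ×ˢ Icc (0:ℝ) 1))
    (hk0 : ∀ s q : ℝ, (s, q) ∉ Icc (0:ℝ) 2 ×ˢ Icc (0:ℝ) 1 → k s q = 0)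
    (F : (ℝ → ℂ) → ℝ → ℂ)
    (hF : ∀ x s, F x s = ∫ q in Ioc (0:ℝ) s, k s q * x (s - q) * x q)
    (x₀ : ℝ → ℂ) (hx₀m : AEStronglyMeasurable x₀ volume)
    (hx₀ : MemLp x₀ 2 (volume.restrict (Ioc (0:ℝ) 1)))
    (hx₀0 : ∀ t : ℝ, t ∉ Icc (0:ℝ) 1 → x₀ t = 0)
    (r : ℝ) (hr : 0 < r) :
    ∃ xn : ℕ → ℝ → ℂ,
      (∀ n, Real.sqrt (∫ q in Ioc (0:ℝ) 1, ‖xn n q - x₀ q‖^2) = r) ∧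
      Tendsto (fun n => Real.sqrt (∫ s in Ioc (0:ℝ) 2, ‖F (xn n) s - F x₀ s‖^2))
        atTop (nhds 0) :=
  stmt5_general k hk hk0 F hF x₀ hx₀ hx₀0 r hr
end

section
/- If for given y ∈ L²_ℂ(0,2) the function x ∈ L²_ℂ(0,1) solves the autoconvolution equation ∫₀ˢ x(s−q)x(q) dq = y(s) for almost all 0 ≤ s ≤ 2, then x and −x are the only solutions of this equation in L²_ℂ(0,1). -/
/-!
Because `x` and `z` vanish outside `[0,1]`, the autoconvolutions `x ⋆ x` and `z ⋆ z` vanish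
outside `[0,2]`, so the equation makes them agree a.e. on all of `ℝ`, and hence
`(𝓕 x)² = (𝓕 z)²` on `ℝ`. The Fourier transform of a compactly supported integrable function
extends to an entire function (its Fourier–Laplace transform), and entire functions form an
integral domain, so `(𝓕 x - 𝓕 z)(𝓕 x + 𝓕 z) = 0` forces `𝓕 x = 𝓕 z` or `𝓕 x = -𝓕 z`.
Injectivity of the Fourier transform on `L¹` then gives `z = x` or `z = -x` a.e.
-/

open MeasureTheory Set

open Filter Topology FourierTransform Complex Real
open scoped ContDiff Pointwise Convolution

section Injectivity

variable {V E : Type*} [NormedAddCommGroup V] [InnerProductSpace ℝ V] [FiniteDimensional ℝ V]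
  [MeasurableSpace V] [BorelSpace V] [NormedAddCommGroup E] [NormedSpace ℂ E] [CompleteSpace E]

theorem Real.ae_eq_of_fourier_eq {f g : V → E} (hf : Integrable f) (hg : Integrable g)
    (h : 𝓕 f = 𝓕 g) : f =ᵐ[volume] g := by
  refine ae_eq_of_integral_contDiff_smul_eq hf.locallyIntegrable hg.locallyIntegrable
    fun φ hφ hφc => ?_
  -- `φ` is the Fourier transform of a Schwartz function `ψ`, and `𝓕` is self-adjoint.
  set ψ : SchwartzMap V ℂ := 𝓕⁻ ((hφc.comp_left Complex.ofReal_zero).toSchwartzMap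
    (Complex.ofRealCLM.contDiff.comp hφ))
  have hψ : 𝓕 (ψ : V → ℂ) = fun x => (φ x : ℂ) := by
    rw [← SchwartzMap.fourier_coe, FourierTransform.fourier_fourierInv_eq]
    rfl
  have key : ∀ u : V → E, Integrable u → ∫ x, φ x • u x = ∫ ξ, ψ ξ • 𝓕 u ξ := by
    intro u hu
    have := VectorFourier.integral_fourierIntegral_smul_eq_flip (L := innerₗ V)
      Real.continuous_fourierChar continuous_inner (ψ.integrable (μ := volume)) hu
    rw [flip_innerₗ] at this
    calc ∫ x, φ x • u x = ∫ x, 𝓕 (ψ : V → ℂ) x • u x := by simp only [hψ, Complex.coe_smul]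
      _ = ∫ ξ, ψ ξ • 𝓕 u ξ := this
  rw [key f hf, key g hg, h]

end Injectivity

section FourierLaplace

variable {E : Type*} [NormedAddCommGroup E] [NormedSpace ℂ E]

noncomputable def fourierLaplace (f : ℝ → E) (w : ℂ) : E :=
  ∫ t : ℝ, cexp (-2 * π * I * t * w) • f t

theorem fourierLaplace_ofReal (f : ℝ → E) (ξ : ℝ) : fourierLaplace f ξ = 𝓕 f ξ := by
  rw [fourier_real_eq_integral_exp_smul, fourierLaplace]
  congr 1 with t
  push_cast
  ring_nf

theorem fourierLaplace_neg (f : ℝ → E) : fourierLaplace (-f) = -fourierLaplace f := by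
  ext w
  simp [fourierLaplace, integral_neg]

theorem HasCompactSupport.exists_norm_smul_le {f : ℝ → E} (hf : HasCompactSupport f)
    {k : ℝ × ℂ → ℂ} (hk : Continuous k) {S : Set ℂ} (hS : IsCompact S) :
    ∃ C, ∀ t, ∀ w ∈ S, ‖k (t, w) • f t‖ ≤ C * ‖f t‖ := by
  obtain ⟨C, hC⟩ := (hf.isCompact.prod hS).exists_bound_of_continuousOn hk.continuousOn
  refine ⟨C, fun t w hw => ?_⟩
  by_cases ht : t ∈ tsupport f
  · rw [norm_smul]
    exact mul_le_mul_of_nonneg_right (hC _ ⟨ht, hw⟩) (norm_nonneg _)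
  · simp [image_eq_zero_of_notMem_tsupport ht]

theorem differentiable_fourierLaplace [CompleteSpace E] {f : ℝ → E} (hf : Integrable f)
    (hfc : HasCompactSupport f) : Differentiable ℂ (fourierLaplace f) := by
  intro w
  have hk : Continuous fun p : ℝ × ℂ => cexp (-2 * π * I * p.1 * p.2) := by fun_prop
  have hk' : Continuous fun p : ℝ × ℂ => (-2 * π * I * p.1) * cexp (-2 * π * I * p.1 * p.2) := by
    fun_prop
  obtain ⟨C₀, hC₀⟩ := hfc.exists_norm_smul_le hk (isCompact_closedBall w 1)
  obtain ⟨C, hC⟩ := hfc.exists_norm_smul_le hk' (isCompact_closedBall w 1)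
  have hmeas : ∀ k : ℝ → ℂ, Continuous k → AEStronglyMeasurable (fun t => k t • f t) :=
    fun k hk => hk.aestronglyMeasurable.smul hf.aestronglyMeasurable
  refine (hasDerivAt_integral_of_dominated_loc_of_deriv_le
    (F := fun v t => cexp (-2 * π * I * t * v) • f t)
    (F' := fun v t => ((-2 * π * I * t) * cexp (-2 * π * I * t * v)) • f t)
    (bound := fun t => C * ‖f t‖) (Metric.closedBall_mem_nhds w one_pos)
    (.of_forall fun v => hmeas _ (by fun_prop))
    ((hf.norm.const_mul C₀).mono' (hmeas _ (by fun_prop))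
      (.of_forall fun t => hC₀ t w (Metric.mem_closedBall_self zero_le_one)))
    (hmeas _ (by fun_prop)) (.of_forall fun t v hv => hC t v hv) (hf.norm.const_mul C)
    (.of_forall fun t v _ => ?_)).2.differentiableAt
  convert ((hasDerivAt_id' v).const_mul (-2 * π * I * t : ℂ)).cexp.smul_const (f t) using 2
  ring

theorem ae_eq_of_fourierLaplace_eq [CompleteSpace E] {f g : ℝ → E} (hf : Integrable f)
    (hg : Integrable g) (h : fourierLaplace f = fourierLaplace g) : f =ᵐ[volume] g :=
  Real.ae_eq_of_fourier_eq hf hg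
    (funext fun ξ => by rw [← fourierLaplace_ofReal, h, fourierLaplace_ofReal])

end FourierLaplace

theorem Differentiable.eq_or_eq_neg_of_sq_eq_sq_on_real {F G : ℂ → ℂ} (hF : Differentiable ℂ F)
    (hG : Differentiable ℂ G) (h : ∀ ξ : ℝ, F ξ ^ 2 = G ξ ^ 2) : F = G ∨ F = -G := by
  have hH : AnalyticOnNhd ℂ (fun w => (F w - G w) * (F w + G w)) univ :=
    fun w _ => ((hF.sub hG).mul (hF.add hG)).analyticAt w
  have hreal : ∃ᶠ w in 𝓝[≠] (0 : ℂ), (F w - G w) * (F w + G w) = 0 := by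
    have : Tendsto ((↑) : ℝ → ℂ) (𝓝[≠] 0) (𝓝[≠] 0) := by
      simpa using continuous_ofReal.continuousWithinAt.tendsto_nhdsWithin
        (x := (0 : ℝ)) (t := {0}ᶜ) fun ξ hξ => by simpa using hξ
    exact this.frequently (.of_forall fun ξ => by linear_combination h ξ)
  have hzero := hH.eqOn_zero_of_preconnected_of_frequently_eq_zero isPreconnected_univ
    (mem_univ 0) hreal
  rcases AnalyticOnNhd.eq_zero_or_eq_zero_of_mul_eq_zero (f := F - G) (g := F + G)
    (fun w _ => (hF.sub hG).analyticAt w) (fun w _ => (hF.add hG).analyticAt w)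
    (fun w _ => hzero (mem_univ w)) isPreconnected_univ with h | h
  · exact .inl (funext fun w => sub_eq_zero.1 (h w trivial))
  · exact .inr (funext fun w => eq_neg_of_add_eq_zero_left (h w trivial))

section Causal

variable {𝕜 E E' F : Type*} [NontriviallyNormedField 𝕜] [NormedAddCommGroup E]
  [NormedAddCommGroup E'] [NormedAddCommGroup F] [NormedSpace 𝕜 E] [NormedSpace 𝕜 E']
  [NormedSpace 𝕜 F] [NormedSpace ℝ F] (L : E →L[𝕜] E' →L[𝕜] F) {u : ℝ → E} {v : ℝ → E'}

theorem convolution_eq_setIntegral_Ioc (hu : ∀ t < 0, u t = 0) (hv : ∀ t < 0, v t = 0) (s : ℝ) :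
    (u ⋆[L] v) s = ∫ q in Ioc 0 s, L (u q) (v (s - q)) := by
  rw [convolution_def, setIntegral_eq_integral_of_ae_compl_eq_zero]
  filter_upwards [Measure.ae_ne volume (0 : ℝ)] with q hq0 hq
  rcases not_and_or.1 hq with hq | hq
  · simp [hu q (lt_of_le_of_ne (not_lt.1 hq) hq0)]
  · simp [hv (s - q) (by linarith [not_le.1 hq])]

theorem convolution_eq_zero_of_notMem_Ioc {a b s : ℝ} (hu : ∀ t ∉ Icc 0 a, u t = 0)
    (hv : ∀ t ∉ Icc 0 b, v t = 0) (hs : s ∉ Ioc 0 (a + b)) : (u ⋆[L] v) s = 0 := by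
  rcases not_and_or.1 hs with hs | hs
  · rw [convolution_eq_setIntegral_Ioc L (fun t ht => hu t fun h => ht.not_ge h.1)
      (fun t ht => hv t fun h => ht.not_ge h.1), Ioc_eq_empty hs, Measure.restrict_empty,
      integral_zero_measure]
  · refine Function.notMem_support.1 fun hmem => hs ?_
    have hsupp := (support_convolution_subset L).trans (add_subset_add
      (Function.support_subset_iff'.2 hu) (Function.support_subset_iff'.2 hv)) hmem
    simpa using (Icc_add_Icc_subset 0 a 0 b hsupp).2

end Causal

theorem convolution_mul_self_eq_setIntegral_Ioc {u : ℝ → ℂ} (hu : ∀ t < 0, u t = 0) (s : ℝ) :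
    (u ⋆[ContinuousLinearMap.mul ℂ ℂ] u) s = ∫ q in Ioc 0 s, u (s - q) * u q := by
  rw [convolution_eq_setIntegral_Ioc _ hu hu]
  simp only [ContinuousLinearMap.mul_apply', mul_comm]

theorem MeasureTheory.MemLp.integrable_of_restrict_Ioc {E : Type*} [NormedAddCommGroup E]
    {u : ℝ → E} {p : ENNReal} {a b : ℝ} (hp : 1 ≤ p) (hu : MemLp u p (volume.restrict (Ioc a b)))
    (hu0 : ∀ t ∉ Icc a b, u t = 0) : Integrable u :=
  ((integrableOn_Icc_iff_integrableOn_Ioc).2 (hu.integrable hp)).integrable_of_forall_notMem_eq_zero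
    hu0

theorem stmt8_general (x y : ℝ → ℂ)
    (hx : MemLp x 2 (volume.restrict (Ioc (0:ℝ) 1)))
    (hx0 : ∀ t : ℝ, t ∉ Icc (0:ℝ) 1 → x t = 0)
    (hxsol : ∀ᵐ s ∂(volume.restrict (Ioc (0:ℝ) 2)),
      ∫ q in Ioc (0:ℝ) s, x (s - q) * x q = y s) :
    ∀ z : ℝ → ℂ, AEStronglyMeasurable z volume →
      MemLp z 2 (volume.restrict (Ioc (0:ℝ) 1)) →
      (∀ t : ℝ, t ∉ Icc (0:ℝ) 1 → z t = 0) →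
      (∀ᵐ s ∂(volume.restrict (Ioc (0:ℝ) 2)),
        ∫ q in Ioc (0:ℝ) s, z (s - q) * z q = y s) →
      (∀ᵐ q ∂(volume.restrict (Ioc (0:ℝ) 1)), z q = x q) ∨
      (∀ᵐ q ∂(volume.restrict (Ioc (0:ℝ) 1)), z q = -x q) := by
  intro z _ hz hz0 hzsol
  have hxi := hx.integrable_of_restrict_Ioc one_le_two hx0
  have hzi := hz.integrable_of_restrict_Ioc one_le_two hz0
  have hconv : x ⋆[ContinuousLinearMap.mul ℂ ℂ] x =ᵐ[volume]
      z ⋆[ContinuousLinearMap.mul ℂ ℂ] z := by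
    filter_upwards [(ae_restrict_iff' measurableSet_Ioc).1 hxsol,
      (ae_restrict_iff' measurableSet_Ioc).1 hzsol] with s hxs hzs
    by_cases hs : s ∈ Ioc (0:ℝ) 2
    · rw [convolution_mul_self_eq_setIntegral_Ioc (fun t ht => hx0 t fun h => ht.not_ge h.1),
        convolution_mul_self_eq_setIntegral_Ioc (fun t ht => hz0 t fun h => ht.not_ge h.1),
        hxs hs, hzs hs]
    · rw [← one_add_one_eq_two] at hs
      rw [convolution_eq_zero_of_notMem_Ioc _ hx0 hx0 hs,
        convolution_eq_zero_of_notMem_Ioc _ hz0 hz0 hs]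
  have hsq : ∀ ξ : ℝ, fourierLaplace x ξ ^ 2 = fourierLaplace z ξ ^ 2 := fun ξ => by
    rw [fourierLaplace_ofReal, fourierLaplace_ofReal, sq, sq,
      ← Real.fourier_mul_convolution_eq hxi hxi, ← Real.fourier_mul_convolution_eq hzi hzi,
      Real.fourier_congr_ae hconv]
  have hxe := differentiable_fourierLaplace hxi (.intro isCompact_Icc hx0)
  have hze := differentiable_fourierLaplace hzi (.intro isCompact_Icc hz0)
  rcases hxe.eq_or_eq_neg_of_sq_eq_sq_on_real hze hsq with h | h
  · exact .inl (ae_restrict_of_ae ((ae_eq_of_fourierLaplace_eq hxi hzi h).mono fun _ => Eq.symm))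
  · rw [← fourierLaplace_neg] at h
    exact .inr (ae_restrict_of_ae
      ((ae_eq_of_fourierLaplace_eq hxi hzi.neg h).mono fun q hq => by simp [hq]))

/-- If `x ∈ L²_ℂ(0,1)` solves the autoconvolution equation `x*x = y` a.e. on `[0,2]`,
then `x` and `-x` are the only solutions of this equation in `L²_ℂ(0,1)`. -/
theorem stmt8 (x y : ℝ → ℂ)
    (hxm : AEStronglyMeasurable x volume)
    (hx : MemLp x 2 (volume.restrict (Ioc (0:ℝ) 1)))
    (hx0 : ∀ t : ℝ, t ∉ Icc (0:ℝ) 1 → x t = 0)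
    (hxsol : ∀ᵐ s ∂(volume.restrict (Ioc (0:ℝ) 2)),
      ∫ q in Ioc (0:ℝ) s, x (s - q) * x q = y s) :
    ∀ z : ℝ → ℂ, AEStronglyMeasurable z volume →
      MemLp z 2 (volume.restrict (Ioc (0:ℝ) 1)) →
      (∀ t : ℝ, t ∉ Icc (0:ℝ) 1 → z t = 0) →
      (∀ᵐ s ∂(volume.restrict (Ioc (0:ℝ) 2)),
        ∫ q in Ioc (0:ℝ) s, z (s - q) * z q = y s) →
      (∀ᵐ q ∂(volume.restrict (Ioc (0:ℝ) 1)), z q = x q) ∨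
      (∀ᵐ q ∂(volume.restrict (Ioc (0:ℝ) 1)), z q = -x q) :=
  stmt8_general x y hx hx0 hxsol
end

section
/- Let k : [0,2]×[0,1] → ℂ be bounded with |k| ≤ k_max. The kernel-based autoconvolution operator F is locally Lipschitz: for all x₁, x₂ ∈ L²_ℂ(0,1), ‖F(x₁) − F(x₂)‖_{L²_ℂ(0,2)} ≤ √2 · k_max · (‖x₁‖_{L²} + ‖x₂‖_{L²}) · ‖x₁ − x₂‖_{L²}. -/
/-!
Write `B_s(u, v) = ∫₀ˢ k(s,q) u(s−q) v(q) dq`, so that `F(x)(s) = B_s(x, x)`. Bilinearity gives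
`F(x₁)(s) − F(x₂)(s) = B_s(x₁, x₁ − x₂) + B_s(x₁ − x₂, x₂)`, and for each `s` Cauchy–Schwarz on the
whole line together with translation invariance of `∫ |u(s − q)|² dq` gives
`|B_s(u, v)| ≤ k_max ‖u‖ ‖v‖`. The pointwise bound `k_max (‖x₁‖ + ‖x₂‖) ‖x₁ − x₂‖` then integrates
over an interval of length 2 to the factor `√2`.
-/

open MeasureTheory Set

section L2

variable {α E : Type*} [MeasurableSpace α] {μ : Measure α} [NormedAddCommGroup E]

theorem integral_norm_mul_norm_le_sqrt_mul_sqrt {f g : α → E} (hf : MemLp f 2 μ)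
    (hg : MemLp g 2 μ) :
    ∫ a, ‖f a‖ * ‖g a‖ ∂μ ≤ √(∫ a, ‖f a‖ ^ 2 ∂μ) * √(∫ a, ‖g a‖ ^ 2 ∂μ) := by
  have h := integral_mul_norm_le_Lp_mul_Lq Real.HolderConjugate.two_two
    (by simpa using hf) (by simpa using hg)
  simpa only [Real.rpow_two, Real.sqrt_eq_rpow, one_div] using h

theorem ae_eq_indicator_Ioc_of_eq_zero_off_Icc {f : ℝ → E} {a b : ℝ}
    (hf : ∀ t ∉ Icc a b, f t = 0) : f =ᵐ[volume] (Ioc a b).indicator f := by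
  have hIcc : f = (Icc a b).indicator f :=
    (indicator_eq_self.2 fun t ht => not_not.1 fun h => ht (hf t h)).symm
  exact (Filter.EventuallyEq.of_eq hIcc).trans (indicator_ae_eq_of_ae_eq_set Ioc_ae_eq_Icc.symm)

theorem MeasureTheory.MemLp.of_restrict_of_ae_eq_indicator {f : α → E} {s : Set α} {p : ENNReal}
    (hs : MeasurableSet s) (hfs : f =ᵐ[μ] s.indicator f) (hf : MemLp f p (μ.restrict s)) :
    MemLp f p μ :=
  ((memLp_indicator_iff_restrict hs).2 hf).ae_eq hfs.symm

theorem setIntegral_norm_sq_eq_integral_of_ae_eq_indicator {f : α → E} {s : Set α}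
    (hfs : f =ᵐ[μ] s.indicator f) : ∫ a in s, ‖f a‖ ^ 2 ∂μ = ∫ a, ‖f a‖ ^ 2 ∂μ :=
  setIntegral_eq_integral_of_ae_compl_eq_zero (hfs.mono fun a ha has => by simp [ha, has])

theorem sqrt_setIntegral_norm_sq_le {f : α → E} {s : Set α} {C : ℝ} (hs : μ s ≠ ⊤) (hC : 0 ≤ C)
    (hf : ∀ a, ‖f a‖ ≤ C) : √(∫ a in s, ‖f a‖ ^ 2 ∂μ) ≤ √(μ.real s) * C := by
  calc √(∫ a in s, ‖f a‖ ^ 2 ∂μ)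
      ≤ √(∫ _ in s, C ^ 2 ∂μ) := by
        refine Real.sqrt_le_sqrt (integral_mono_of_nonneg (.of_forall fun a => by positivity)
          (integrableOn_const hs) (.of_forall fun a => ?_))
        exact pow_le_pow_left₀ (norm_nonneg _) (hf a) 2
    _ = √(μ.real s) * C := by
        rw [setIntegral_const, smul_eq_mul, Real.sqrt_mul measureReal_nonneg, Real.sqrt_sq hC]

end L2

/-- `B_s(u, v)`; the operator of the theorem is `F(x) = kernelConv k x x`. -/
noncomputable def kernelConv (k : ℝ → ℝ → ℂ) (u v : ℝ → ℂ) (s : ℝ) : ℂ :=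
  ∫ q in Ioc 0 s, k s q * u (s - q) * v q

section KernelConvolution

variable {k : ℝ → ℝ → ℂ} {g u v x y : ℝ → ℂ} {K : ℝ}

theorem integrable_mul_comp_sub_mul (hg : AEStronglyMeasurable g) (hgK : ∀ q, ‖g q‖ ≤ K)
    (hu : MemLp u 2) (hv : MemLp v 2) (s : ℝ) :
    Integrable (fun q => g q * u (s - q) * v q) := by
  have hus : MemLp (fun q => u (s - q)) 2 :=
    hu.comp_measurePreserving (Measure.measurePreserving_sub_left volume s)
  refine Integrable.mono' ((hus.integrable_mul hv).norm.const_mul K)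
    ((hg.mul hus.1).mul hv.1) (.of_forall fun q => ?_)
  rw [norm_mul, norm_mul, mul_assoc, Pi.mul_apply, norm_mul]
  gcongr
  exact hgK q

theorem norm_setIntegral_mul_comp_sub_mul_le (hg : AEStronglyMeasurable g)
    (hgK : ∀ q, ‖g q‖ ≤ K) (hu : MemLp u 2) (hv : MemLp v 2) (s : ℝ) (A : Set ℝ) :
    ‖∫ q in A, g q * u (s - q) * v q‖ ≤ K * (√(∫ q, ‖u q‖ ^ 2) * √(∫ q, ‖v q‖ ^ 2)) := by
  have hK : 0 ≤ K := (norm_nonneg _).trans (hgK 0)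
  have hus : MemLp (fun q => u (s - q)) 2 :=
    hu.comp_measurePreserving (Measure.measurePreserving_sub_left volume s)
  have hint := integrable_mul_comp_sub_mul hg hgK hu hv s
  calc ‖∫ q in A, g q * u (s - q) * v q‖
      ≤ ∫ q in A, ‖g q * u (s - q) * v q‖ := norm_integral_le_integral_norm _
    _ ≤ ∫ q, ‖g q * u (s - q) * v q‖ :=
        setIntegral_le_integral hint.norm (.of_forall fun _ => norm_nonneg _)
    _ ≤ ∫ q, K * (‖u (s - q)‖ * ‖v q‖) := by
        refine integral_mono hint.norm ((hus.integrable_mul hv).norm.const_mul K |>.congr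
          (.of_forall fun q => by simp)) fun q => ?_
        rw [norm_mul, norm_mul, mul_assoc]
        gcongr
        exact hgK q
    _ = K * ∫ q, ‖u (s - q)‖ * ‖v q‖ := integral_const_mul _ _
    _ ≤ K * (√(∫ q, ‖u (s - q)‖ ^ 2) * √(∫ q, ‖v q‖ ^ 2)) := by
        gcongr
        exact integral_norm_mul_norm_le_sqrt_mul_sqrt hus hv
    _ = K * (√(∫ q, ‖u q‖ ^ 2) * √(∫ q, ‖v q‖ ^ 2)) := by
        rw [integral_sub_left_eq_self (fun q => ‖u q‖ ^ 2)]

theorem norm_kernelConv_le (hk : Measurable (Function.uncurry k)) (hkK : ∀ s q, ‖k s q‖ ≤ K)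
    (hu : MemLp u 2) (hv : MemLp v 2) (s : ℝ) :
    ‖kernelConv k u v s‖ ≤ K * (√(∫ q, ‖u q‖ ^ 2) * √(∫ q, ‖v q‖ ^ 2)) :=
  norm_setIntegral_mul_comp_sub_mul_le (hk.comp measurable_prodMk_left).aestronglyMeasurable
    (hkK s) hu hv s _

theorem kernelConv_sub_kernelConv (hk : Measurable (Function.uncurry k))
    (hkK : ∀ s q, ‖k s q‖ ≤ K) (hx : MemLp x 2) (hy : MemLp y 2) (s : ℝ) :
    kernelConv k x x s - kernelConv k y y s = 
      kernelConv k x (x - y) s + kernelConv k (x - y) y s := by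
  have hks : AEStronglyMeasurable (k s) := (hk.comp measurable_prodMk_left).aestronglyMeasurable
  have hint {u v : ℝ → ℂ} (hu : MemLp u 2) (hv : MemLp v 2) :
      IntegrableOn (fun q => k s q * u (s - q) * v q) (Ioc 0 s) :=
    (integrable_mul_comp_sub_mul hks (hkK s) hu hv s).integrableOn
  rw [kernelConv, kernelConv, kernelConv, kernelConv, ← integral_sub (hint hx hx) (hint hy hy),
    ← integral_add (hint hx (hx.sub hy)) (hint (hx.sub hy) hy)]
  refine integral_congr_ae (.of_forall fun q => ?_)
  simp only [Pi.sub_apply]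
  ring

end KernelConvolution

theorem stmt15_general (k : ℝ → ℝ → ℂ) (kmax : ℝ)
    (hkm : Measurable (Function.uncurry k))
    (hkb : ∀ s q : ℝ, ‖k s q‖ ≤ kmax)
    (x₁ x₂ : ℝ → ℂ)
    (hx₁ : MemLp x₁ 2 (volume.restrict (Ioc (0:ℝ) 1)))
    (hx₂ : MemLp x₂ 2 (volume.restrict (Ioc (0:ℝ) 1)))
    (hx₁0 : ∀ t : ℝ, t ∉ Icc (0:ℝ) 1 → x₁ t = 0)
    (hx₂0 : ∀ t : ℝ, t ∉ Icc (0:ℝ) 1 → x₂ t = 0) :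
    Real.sqrt (∫ s in Ioc (0:ℝ) 2,
        ‖(∫ q in Ioc (0:ℝ) s, k s q * x₁ (s - q) * x₁ q)
          - (∫ q in Ioc (0:ℝ) s, k s q * x₂ (s - q) * x₂ q)‖^2)
      ≤ Real.sqrt 2 * kmax *
        (Real.sqrt (∫ q in Ioc (0:ℝ) 1, ‖x₁ q‖^2)
          + Real.sqrt (∫ q in Ioc (0:ℝ) 1, ‖x₂ q‖^2)) *
        Real.sqrt (∫ q in Ioc (0:ℝ) 1, ‖x₁ q - x₂ q‖^2) := by
  have hx₁s := ae_eq_indicator_Ioc_of_eq_zero_off_Icc hx₁0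
  have hx₂s := ae_eq_indicator_Ioc_of_eq_zero_off_Icc hx₂0
  have hds : (fun t => x₁ t - x₂ t) =ᵐ[volume] (Ioc 0 1).indicator fun t => x₁ t - x₂ t := by
    rw [indicator_sub]
    exact hx₁s.sub hx₂s
  have hx₁L := hx₁.of_restrict_of_ae_eq_indicator measurableSet_Ioc hx₁s
  have hx₂L := hx₂.of_restrict_of_ae_eq_indicator measurableSet_Ioc hx₂s
  rw [setIntegral_norm_sq_eq_integral_of_ae_eq_indicator hx₁s,
    setIntegral_norm_sq_eq_integral_of_ae_eq_indicator hx₂s,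
    setIntegral_norm_sq_eq_integral_of_ae_eq_indicator hds]
  have hK : 0 ≤ kmax := (norm_nonneg _).trans (hkb 0 0)
  have hpt (s : ℝ) : ‖kernelConv k x₁ x₁ s - kernelConv k x₂ x₂ s‖ ≤
      kmax * ((√(∫ q, ‖x₁ q‖ ^ 2) + √(∫ q, ‖x₂ q‖ ^ 2)) * √(∫ q, ‖x₁ q - x₂ q‖ ^ 2)) := by
    rw [kernelConv_sub_kernelConv hkm hkb hx₁L hx₂L]
    refine (norm_add_le _ _).trans ?_
    have h₁ := norm_kernelConv_le hkm hkb hx₁L (hx₁L.sub hx₂L) s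
    have h₂ := norm_kernelConv_le hkm hkb (hx₁L.sub hx₂L) hx₂L s
    simp only [Pi.sub_apply] at h₁ h₂
    linarith
  calc _ ≤ √(volume.real (Ioc (0 : ℝ) 2)) * _ :=
        sqrt_setIntegral_norm_sq_le measure_Ioc_lt_top.ne (by positivity) hpt
    _ = _ := by
      rw [Real.volume_real_Ioc, sub_zero, max_eq_left zero_le_two]
      ring

/-- The kernel-based autoconvolution operator with bounded kernel `|k| ≤ k_max` is locally
Lipschitz: `‖F(x₁) − F(x₂)‖_{L²(0,2)} ≤ √2 k_max (‖x₁‖ + ‖x₂‖) ‖x₁ − x₂‖`. -/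
theorem stmt15 (k : ℝ → ℝ → ℂ) (kmax : ℝ)
    (hkm : Measurable (Function.uncurry k))
    (hkb : ∀ s q : ℝ, ‖k s q‖ ≤ kmax)
    (x₁ x₂ : ℝ → ℂ)
    (hx₁m : AEStronglyMeasurable x₁ volume) (hx₂m : AEStronglyMeasurable x₂ volume)
    (hx₁ : MemLp x₁ 2 (volume.restrict (Ioc (0:ℝ) 1)))
    (hx₂ : MemLp x₂ 2 (volume.restrict (Ioc (0:ℝ) 1)))
    (hx₁0 : ∀ t : ℝ, t ∉ Icc (0:ℝ) 1 → x₁ t = 0)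
    (hx₂0 : ∀ t : ℝ, t ∉ Icc (0:ℝ) 1 → x₂ t = 0) :
    Real.sqrt (∫ s in Ioc (0:ℝ) 2,
        ‖(∫ q in Ioc (0:ℝ) s, k s q * x₁ (s - q) * x₁ q)
          - (∫ q in Ioc (0:ℝ) s, k s q * x₂ (s - q) * x₂ q)‖^2)
      ≤ Real.sqrt 2 * kmax *
        (Real.sqrt (∫ q in Ioc (0:ℝ) 1, ‖x₁ q‖^2)
          + Real.sqrt (∫ q in Ioc (0:ℝ) 1, ‖x₂ q‖^2)) *
        Real.sqrt (∫ q in Ioc (0:ℝ) 1, ‖x₁ q - x₂ q‖^2) :=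
  stmt15_general k kmax hkm hkb x₁ x₂ hx₁ hx₂ hx₁0 hx₂0
end
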